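/- Let n ≥ 2, D ≥ 2, ρ ≥ D^{-1}. Cover the unit sphere S^{n−1} by a family Θ of caps θ of radius 1/D, and for each θ let θ* denote the slab of dimensions D^{-1} × 1 × ⋯ × 1 through the origin perpendicular to the direction of θ, intersected with the unit ball. Then every point ω ∈ ℝⁿ with ρ ≤ |ω| ≤ 1 belongs to at most C(n)·ρ^{−n}·D^{n−2} of the slabs θ*. -/

import Mathlib

/-!
A cap centre `v` with `ω ∈ slab v D` satisfies `|⟪v, ω / ‖ω‖⟫| ≤ 1 / (D ρ) =: t`, so the centres
lie in a band of width `t` around the great sphere `ω⊥`. Being `1/D`-separated, the balls of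
radius `1/(2D)` around them are disjoint and lie in the shell `|1 - ‖x‖| ≤ 1/(2D)` cut by the slab
`|⟪x, ω / ‖ω‖⟫| ≤ t + 1/(2D)`. Splitting space as `ℝ ω ⊕ ω⊥`, this region sits inside an interval
of length `≈ t` times an `(n-1)`-dimensional annulus of width `≈ 1/D + t²`. Comparing volumes gives
`#caps · D⁻ⁿ ≲ t (1/D + t²) ≲ D⁻² ρ⁻²`.
-/

open Set

/-- The slab `θ*` associated to a `1/D`-cap of the unit sphere with center `v`: the set
of vectors in the unit ball whose inner product with every direction in the cap is at
most `1/D` in absolute value. -/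
def slab {n : ℕ} (v : EuclideanSpace ℝ (Fin n)) (D : ℝ) : Set (EuclideanSpace ℝ (Fin n)) :=
  {w | ‖w‖ ≤ 1 ∧ ∀ u : EuclideanSpace ℝ (Fin n), ‖u‖ = 1 → dist u v ≤ D⁻¹ →
    |(inner ℝ u w : ℝ)| ≤ D⁻¹}

open MeasureTheory Metric Module Real
open scoped ENNReal RealInnerProductSpace

theorem pow_sub_pow_le_of_le {x y : ℝ} (hy : 0 ≤ y) (hyx : y ≤ x) (k : ℕ) :
    x ^ k - y ^ k ≤ k * x ^ (k - 1) * (x - y) := by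
  have h := abs_pow_sub_pow_le x y k
  rw [abs_of_nonneg (sub_nonneg.2 (pow_le_pow_left₀ hy hyx k)), abs_of_nonneg (sub_nonneg.2 hyx),
    abs_of_nonneg hy, abs_of_nonneg (hy.trans hyx), max_eq_left hyx] at h
  linarith

theorem sqrt_sq_sub_sq_le {a : ℝ} (ha : 0 ≤ a) (w : ℝ) : √(a ^ 2 - w ^ 2) ≤ a := by
  calc √(a ^ 2 - w ^ 2) ≤ √(a ^ 2) := Real.sqrt_le_sqrt (by nlinarith)
    _ = a := Real.sqrt_sq ha

theorem sub_sqrt_sq_sub_sq_le {a : ℝ} (ha : 0 < a) (w : ℝ) :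
    a - √(a ^ 2 - w ^ 2) ≤ w ^ 2 / a := by
  have h0 := Real.sqrt_nonneg (a ^ 2 - w ^ 2)
  have hle := sqrt_sq_sub_sq_le ha.le w
  have hsq : a ^ 2 - w ^ 2 ≤ √(a ^ 2 - w ^ 2) ^ 2 := by
    rcases le_total 0 (a ^ 2 - w ^ 2) with h | h
    · rw [Real.sq_sqrt h]
    · rw [Real.sqrt_eq_zero'.2 h]; linarith
  rw [le_div_iff₀ ha]
  nlinarith

/-- The left side is the volume factor of `volume_slabShell_le` for
`slabShell e (t + s / 2) (1 - s / 2) (1 + s / 2)`; it is `≲ t (s + t²) ≲ t²`. -/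
theorem mul_pow_sub_sqrt_pow_le {s t : ℝ} (hs : 0 ≤ s) (hs2 : s ≤ 1 / 2) (hst : s ≤ t)
    (ht : t ≤ 1) (k : ℕ) :
    (t + s / 2) * ((1 + s / 2) ^ k - √((1 - s / 2) ^ 2 - (t + s / 2) ^ 2) ^ k) ≤
      6 * k * 2 ^ k * t ^ 2 := by
  set a' := √((1 - s / 2) ^ 2 - (t + s / 2) ^ 2)
  have ha' : a' ≤ 1 + s / 2 := (sqrt_sq_sub_sq_le (by linarith) _).trans (by linarith)
  have hgap : 1 + s / 2 - a' ≤ 4 * t := by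
    have h := sub_sqrt_sq_sub_sq_le (a := 1 - s / 2) (by linarith) (t + s / 2)
    have : (t + s / 2) ^ 2 / (1 - s / 2) ≤ 3 * t := by
      rw [div_le_iff₀ (by linarith)]; nlinarith
    linarith
  have hpow : (1 + s / 2) ^ k - a' ^ k ≤ k * 2 ^ k * (4 * t) :=
    (pow_sub_pow_le_of_le (Real.sqrt_nonneg _) ha' k).trans <|
      mul_le_mul (mul_le_mul_of_nonneg_left ((pow_le_pow_left₀ (by linarith) (by linarith) _).trans
        (pow_le_pow_right₀ one_le_two (Nat.sub_le k 1))) k.cast_nonneg) hgap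
        (sub_nonneg.2 ha') (by positivity)
  calc (t + s / 2) * ((1 + s / 2) ^ k - a' ^ k)
      ≤ (3 / 2 * t) * (k * 2 ^ k * (4 * t)) :=
        mul_le_mul (by linarith) hpow (sub_nonneg.2 (pow_le_pow_left₀ (Real.sqrt_nonneg _) ha' k))
          (by linarith)
    _ = 6 * k * 2 ^ k * t ^ 2 := by ring

noncomputable def unitBallVolume (d : ℕ) : ℝ := √π ^ d / Gamma ((d : ℝ) / 2 + 1)

theorem unitBallVolume_pos (d : ℕ) : 0 < unitBallVolume d := by
  unfold unitBallVolume; positivity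

section Volume

variable {E : Type*} [NormedAddCommGroup E] [InnerProductSpace ℝ E] [FiniteDimensional ℝ E]
  [MeasurableSpace E] [BorelSpace E] [Nontrivial E]

theorem volume_ball_eq_ofReal (x : E) {r : ℝ} (hr : 0 ≤ r) :
    volume (ball x r) = .ofReal (r ^ finrank ℝ E * unitBallVolume (finrank ℝ E)) := by
  rw [InnerProductSpace.volume_ball, ENNReal.ofReal_mul (by positivity), ENNReal.ofReal_pow hr]
  rfl

theorem volume_closedBall_diff_ball (x : E) {a b : ℝ} (ha : 0 ≤ a) (hab : a ≤ b) :
    volume (closedBall x b \ ball x a) =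
      .ofReal ((b ^ finrank ℝ E - a ^ finrank ℝ E) * unitBallVolume (finrank ℝ E)) := by
  rw [measure_sdiff (ball_subset_closedBall.trans (closedBall_subset_closedBall hab))
      measurableSet_ball.nullMeasurableSet measure_ball_lt_top.ne,
    Measure.addHaar_closedBall_eq_addHaar_ball, volume_ball_eq_ofReal _ ha,
    volume_ball_eq_ofReal _ (ha.trans hab), sub_mul,
    ENNReal.ofReal_sub _ (mul_nonneg (by positivity) (unitBallVolume_pos _).le)]

end Volume

theorem Finset.card_mul_measure_ball_le {X : Type*} [NormedAddCommGroup X] [MeasurableSpace X]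
    [BorelSpace X] (μ : Measure X) [μ.IsAddHaarMeasure] {F : Finset X} {δ : ℝ} {S : Set X}
    (hsep : (F : Set X).Pairwise fun u v ↦ 2 * δ ≤ dist u v) (hsub : ∀ v ∈ F, ball v δ ⊆ S) :
    F.card * μ (ball 0 δ) ≤ μ S := by
  have hdisj : (F : Set X).PairwiseDisjoint (ball · δ) :=
    hsep.mono' fun u v h ↦ ball_disjoint_ball (by linarith)
  calc (F.card : ℝ≥0∞) * μ (ball 0 δ) = ∑ v ∈ F, μ (ball v δ) := by
        simp [Measure.addHaar_ball_center]
    _ = μ (⋃ v ∈ F, ball v δ) := (measure_biUnion_finset hdisj fun _ _ ↦ measurableSet_ball).symm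
    _ ≤ μ S := measure_mono (iUnion₂_subset hsub)

section SlabShell

variable {E : Type*} [NormedAddCommGroup E] [InnerProductSpace ℝ E]

def slabShell (e : E) (w a b : ℝ) : Set E := {x | |⟪e, x⟫| ≤ w ∧ a ≤ ‖x‖ ∧ ‖x‖ ≤ b}

theorem ball_subset_slabShell {e v : E} (he : ‖e‖ = 1) (hv : ‖v‖ = 1) {t : ℝ}
    (hev : |⟪e, v⟫| ≤ t) (δ : ℝ) : ball v δ ⊆ slabShell e (t + δ) (1 - δ) (1 + δ) := by
  intro x hx
  rw [mem_ball, dist_eq_norm] at hx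
  have hinner : |⟪e, x - v⟫| ≤ ‖x - v‖ := by
    simpa [he] using abs_real_inner_le_norm e (x - v)
  refine ⟨?_, ?_, ?_⟩
  · calc |⟪e, x⟫| = |⟪e, v⟫ + ⟪e, x - v⟫| := by rw [inner_sub_right, add_sub_cancel]
      _ ≤ t + δ := (abs_add_le _ _).trans (by linarith)
  · linarith [norm_sub_norm_le v x, norm_sub_rev x v]
  · linarith [norm_sub_norm_le x v]

theorem norm_orthogonalProjectionOnto_span_unit {e : E} (he : ‖e‖ = 1) (x : E) :
    ‖(ℝ ∙ e).orthogonalProjectionOnto x‖ = |⟪e, x⟫| := by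
  rw [← Submodule.norm_coe, ← Submodule.starProjection_apply,
    Submodule.starProjection_unit_singleton ℝ he, norm_smul, he, mul_one, Real.norm_eq_abs]

variable [FiniteDimensional ℝ E] [MeasurableSpace E] [BorelSpace E]

theorem Submodule.measurePreserving_orthogonalProjectionOnto_prod (K : Submodule ℝ E) :
    MeasurePreserving fun x : E ↦
      (K.orthogonalProjectionOnto x, Kᗮ.orthogonalProjectionOnto x) := by
  convert (WithLp.volume_preserving_ofLp K Kᗮ).comp K.orthogonalDecomposition.measurePreserving
    using 1
  ext x <;> simp

theorem volume_slabShell_le {m : ℕ} (hE : finrank ℝ E = m + 2) {e : E} (he : ‖e‖ = 1)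
    {w a b : ℝ} (hw : 0 ≤ w) (ha : 0 ≤ a) (hab : a ≤ b) :
    volume (slabShell e w a b) ≤ .ofReal (w * unitBallVolume 1 *
      ((b ^ (m + 1) - √(a ^ 2 - w ^ 2) ^ (m + 1)) * unitBallVolume (m + 1))) := by
  set K := ℝ ∙ e
  set a' := √(a ^ 2 - w ^ 2)
  have he0 : e ≠ 0 := norm_ne_zero_iff.1 (by rw [he]; exact one_ne_zero)
  have hK : finrank ℝ K = 1 := finrank_span_singleton he0
  have hKperp : finrank ℝ Kᗮ = m + 1 := by
    have : Fact (finrank ℝ E = m + 1 + 1) := ⟨hE⟩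
    exact Submodule.finrank_orthogonal_span_singleton he0
  have : Nontrivial K := Module.nontrivial_of_finrank_eq_succ hK
  have : Nontrivial Kᗮ := Module.nontrivial_of_finrank_eq_succ hKperp
  have hsub : slabShell e w a b ⊆ (fun x ↦ (K.orthogonalProjectionOnto x,
      Kᗮ.orthogonalProjectionOnto x)) ⁻¹' (closedBall 0 w ×ˢ (closedBall 0 b \ ball 0 a')) := by
    rintro x ⟨hxe, hax, hxb⟩
    have hpyth := Submodule.norm_sq_eq_add_norm_sq_projection x K
    rw [norm_orthogonalProjectionOnto_span_unit he] at hpyth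
    set y := Kᗮ.orthogonalProjectionOnto x
    simp only [mem_preimage, mem_prod, mem_closedBall, mem_sdiff, mem_ball, dist_zero_right,
      not_lt]
    have hyx : ‖y‖ ≤ ‖x‖ :=
      (pow_le_pow_iff_left₀ (norm_nonneg _) (norm_nonneg _) two_ne_zero).1
        (by nlinarith [sq_nonneg |⟪e, x⟫|])
    refine ⟨(norm_orthogonalProjectionOnto_span_unit he x).trans_le hxe, hyx.trans hxb, ?_⟩
    calc a' ≤ √(‖y‖ ^ 2) := Real.sqrt_le_sqrt (by nlinarith [abs_nonneg ⟪e, x⟫])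
      _ = ‖y‖ := Real.sqrt_sq (norm_nonneg _)
  calc volume (slabShell e w a b)
      ≤ volume (closedBall (0 : K) w ×ˢ (closedBall (0 : Kᗮ) b \ ball 0 a')) :=
        (measure_mono hsub).trans_eq
          ((K.measurePreserving_orthogonalProjectionOnto_prod).measure_preimage
            (measurableSet_closedBall.prod
              (measurableSet_closedBall.diff measurableSet_ball)).nullMeasurableSet)
    _ = _ := by
        rw [Measure.volume_eq_prod, Measure.prod_prod, Measure.addHaar_closedBall_eq_addHaar_ball,
          volume_ball_eq_ofReal _ hw,
          volume_closedBall_diff_ball _ (Real.sqrt_nonneg _) ((sqrt_sq_sub_sq_le ha w).trans hab),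
          hK, hKperp, pow_one, ← ENNReal.ofReal_mul (mul_nonneg hw (unitBallVolume_pos 1).le)]

theorem card_mul_volume_ball_le_of_separated_band {m : ℕ} (hE : finrank ℝ E = m + 2)
    {F : Finset E} {e : E} {s t : ℝ} (he : ‖e‖ = 1) (hs : 0 ≤ s) (hs2 : s ≤ 2) (ht : 0 ≤ t)
    (hsep : (F : Set E).Pairwise fun u v ↦ s ≤ dist u v)
    (hF : ∀ v ∈ F, ‖v‖ = 1 ∧ |⟪e, v⟫| ≤ t) :
    F.card * ((s / 2) ^ (m + 2) * unitBallVolume (m + 2)) ≤ (t + s / 2) * unitBallVolume 1 *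
      (((1 + s / 2) ^ (m + 1) - √((1 - s / 2) ^ 2 - (t + s / 2) ^ 2) ^ (m + 1)) *
        unitBallVolume (m + 1)) := by
  have : Nontrivial E := Module.nontrivial_of_finrank_eq_succ hE
  have hpack := F.card_mul_measure_ball_le volume (δ := s / 2)
    (hsep.mono' fun u v h ↦ by linarith)
    fun v hv ↦ ball_subset_slabShell he (hF v hv).1 (hF v hv).2 _
  rw [volume_ball_eq_ofReal _ (by positivity), hE, ← ENNReal.ofReal_natCast,
    ← ENNReal.ofReal_mul (by positivity)] at hpack
  refine (ENNReal.ofReal_le_ofReal_iff ?_).1 <| hpack.trans <|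
    volume_slabShell_le hE he (by linarith) (by linarith) (by linarith)
  have hannulus : √((1 - s / 2) ^ 2 - (t + s / 2) ^ 2) ≤ 1 + s / 2 :=
    (sqrt_sq_sub_sq_le (by linarith) _).trans (by linarith)
  have := unitBallVolume_pos 1
  have := unitBallVolume_pos (m + 1)
  have := sub_nonneg.2 (pow_le_pow_left₀ (Real.sqrt_nonneg _) hannulus (m + 1))
  positivity

theorem exists_card_mul_pow_le_of_separated_band {m : ℕ} (hE : finrank ℝ E = m + 2) :
    ∃ C > 0, ∀ (F : Finset E) (e : E) (s t : ℝ), ‖e‖ = 1 → 0 < s → s ≤ 1 / 2 → s ≤ t → t ≤ 1 →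
      (F : Set E).Pairwise (fun u v ↦ s ≤ dist u v) → (∀ v ∈ F, ‖v‖ = 1 ∧ |⟪e, v⟫| ≤ t) →
      F.card * s ^ m ≤ C * (t / s) ^ 2 := by
  set c₁ := unitBallVolume 1
  set c₂ := unitBallVolume (m + 1)
  set c₃ := unitBallVolume (m + 2)
  have hc₁ : 0 < c₁ := unitBallVolume_pos 1
  have hc₂ : 0 < c₂ := unitBallVolume_pos (m + 1)
  have hc₃ : 0 < c₃ := unitBallVolume_pos (m + 2)
  refine ⟨2 ^ (m + 2) * (6 * (m + 1) * 2 ^ (m + 1)) * c₁ * c₂ / c₃, by positivity, ?_⟩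
  intro F e s t he hs hs2 hst ht hsep hF
  have hvol := card_mul_volume_ball_le_of_separated_band hE he hs.le (by linarith) (by linarith)
    hsep hF
  have hwidth := mul_pow_sub_sqrt_pow_le hs.le hs2 hst ht (m + 1)
  have key : F.card * s ^ m * (s ^ 2 * c₃) ≤
      2 ^ (m + 2) * (6 * (m + 1) * 2 ^ (m + 1)) * c₁ * c₂ * t ^ 2 := by
    calc F.card * s ^ m * (s ^ 2 * c₃) = 2 ^ (m + 2) * (F.card * ((s / 2) ^ (m + 2) * c₃)) := by
          rw [div_pow]; field_simp; ring
      _ ≤ 2 ^ (m + 2) * ((t + s / 2) * c₁ *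
          (((1 + s / 2) ^ (m + 1) - √((1 - s / 2) ^ 2 - (t + s / 2) ^ 2) ^ (m + 1)) * c₂)) := by
          gcongr
      _ = 2 ^ (m + 2) * c₁ * c₂ * ((t + s / 2) *
          ((1 + s / 2) ^ (m + 1) - √((1 - s / 2) ^ 2 - (t + s / 2) ^ 2) ^ (m + 1))) := by ring
      _ ≤ 2 ^ (m + 2) * c₁ * c₂ * (6 * ((m + 1 : ℕ) : ℝ) * 2 ^ (m + 1) * t ^ 2) := by gcongr
      _ = _ := by push_cast; ring
  rw [div_pow, div_mul_div_comm, le_div_iff₀ (by positivity)]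
  linarith

end SlabShell

theorem abs_inner_normalize_le_of_mem_slab {n : ℕ} {v ω : EuclideanSpace ℝ (Fin n)} {D ρ : ℝ}
    (hv : ‖v‖ = 1) (hωv : ω ∈ slab v D) (hD : 0 ≤ D) (hρ : 0 < ρ) (hρω : ρ ≤ ‖ω‖) :
    |⟪‖ω‖⁻¹ • ω, v⟫| ≤ D⁻¹ * ρ⁻¹ := by
  have hinner : |⟪v, ω⟫| ≤ D⁻¹ := hωv.2 v hv (by simpa using hD)
  rw [real_inner_smul_left, abs_mul, abs_inv, abs_norm, real_inner_comm, mul_comm]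
  exact mul_le_mul hinner (inv_anti₀ hρ hρω) (by positivity) (by positivity)

/-- Cover `S^{n-1}` by `1/D`-caps with `1/D`-separated centers `Θ`.  Every `ω` with
`ρ ≤ |ω| ≤ 1` (where `ρ ≥ 1/D`) lies in at most `C(n) ρ^{-n} D^{n-2}` of the slabs. -/
theorem slab_counting (n : ℕ) (hn : 2 ≤ n) :
    ∃ C > 0, ∀ (D ρ : ℝ) (Θ : Finset (EuclideanSpace ℝ (Fin n)))
      (ω : EuclideanSpace ℝ (Fin n)),
      2 ≤ D → D⁻¹ ≤ ρ →
      (∀ v ∈ Θ, ‖v‖ = 1) →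
      (∀ v ∈ Θ, ∀ w ∈ Θ, v ≠ w → D⁻¹ ≤ dist v w) →
      (∀ u : EuclideanSpace ℝ (Fin n), ‖u‖ = 1 → ∃ v ∈ Θ, dist u v ≤ D⁻¹) →
      ρ ≤ ‖ω‖ → ‖ω‖ ≤ 1 →
      ({v | v ∈ Θ ∧ ω ∈ slab v D}.ncard : ℝ) ≤ C * ρ ^ (-(n : ℤ)) * D ^ ((n : ℤ) - 2) := by
  classical
  obtain ⟨m, rfl⟩ := Nat.exists_eq_add_of_le' hn
  obtain ⟨C, hC, hband⟩ := exists_card_mul_pow_le_of_separated_band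
    (E := EuclideanSpace ℝ (Fin (m + 2))) finrank_euclideanSpace_fin
  refine ⟨C, hC, fun D ρ Θ ω hD hρD hΘ hsep _ hρω hω1 ↦ ?_⟩
  have hρ : 0 < ρ := (inv_pos.2 (by linarith)).trans_le hρD
  have hω : ω ≠ 0 := norm_pos_iff.1 (hρ.trans_le hρω)
  have hρ1 : 1 ≤ ρ⁻¹ := one_le_inv₀ hρ |>.2 (hρω.trans hω1)
  set F := Θ.filter (ω ∈ slab · D)
  have hF : ∀ v ∈ F, ‖v‖ = 1 ∧ |⟪‖ω‖⁻¹ • ω, v⟫| ≤ D⁻¹ * ρ⁻¹ := fun v hv ↦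
    have hv : v ∈ Θ ∧ ω ∈ slab v D := Finset.mem_filter.1 hv
    ⟨hΘ v hv.1, abs_inner_normalize_le_of_mem_slab (hΘ v hv.1) hv.2 (by linarith) hρ hρω⟩
  have hcount := hband F _ D⁻¹ (D⁻¹ * ρ⁻¹) (norm_smul_inv_norm hω) (by positivity)
    (by rw [one_div]; exact inv_anti₀ two_pos hD)
    (le_mul_of_one_le_right (by positivity) hρ1)
    (by simpa [hρ.ne'] using mul_le_mul_of_nonneg_right hρD (inv_nonneg.2 hρ.le))
    (fun u hu v hv huv ↦ hsep u (Finset.mem_filter.1 hu).1 v (Finset.mem_filter.1 hv).1 huv) hF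
  rw [mul_div_cancel_left₀ _ (by positivity)] at hcount
  have hcard : {v | v ∈ Θ ∧ ω ∈ slab v D}.ncard = F.card := by
    rw [← Finset.coe_filter, ncard_coe_finset]
  rw [hcard, zpow_neg, zpow_natCast, ← inv_pow, Nat.cast_add, Nat.cast_two, add_sub_cancel_right,
    zpow_natCast]
  calc (F.card : ℝ) = F.card * D⁻¹ ^ m * D ^ m := by
        rw [mul_assoc, ← mul_pow, inv_mul_cancel₀ (by positivity), one_pow, mul_one]
    _ ≤ C * ρ⁻¹ ^ 2 * D ^ m := by gcongr
    _ ≤ C * ρ⁻¹ ^ (m + 2) * D ^ m := by gcongr
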